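/- arXiv:math/9803147 — 7 statements merged into one kernel-verified Lean document; each statement's English description precedes it below -/
import Mathlib

section
/- In the Jordanian quantum algebra U_h(sl(2)) with generators X, Y, H satisfying [X,Y]=H, [H,X]=2sinh(hX)/h, [H,Y]=-Y cosh(hX)-cosh(hX) Y, the elements Z_+ = (2/h) tanh(hX/2), Z_- = cosh(hX/2) Y cosh(hX/2), and H satisfy the undeformed sl(2) relations [H, Z_±] = ±2 Z_± and [Z_+, Z_-] = H. -/
open NormedSpace

/-- `sinh` of an element of a complex Banach algebra, via the exponential series. -/
noncomputable def sinhA {A : Type*} [NormedRing A] [NormedAlgebra ℂ A] [CompleteSpace A]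
    (a : A) : A := (2 : ℂ)⁻¹ • (exp a - exp (-a))

/-- `cosh` of an element of a complex Banach algebra. -/
noncomputable def coshA {A : Type*} [NormedRing A] [NormedAlgebra ℂ A] [CompleteSpace A]
    (a : A) : A := (2 : ℂ)⁻¹ • (exp a + exp (-a))

/-- `tanh` of an element of a complex Banach algebra (meaningful when `coshA a` is a unit). -/
noncomputable def tanhA {A : Type*} [NormedRing A] [NormedAlgebra ℂ A] [CompleteSpace A]
    (a : A) : A := Ring.inverse (coshA a) * sinhA a

/-!
Conjugation by `exp (t • X)` integrates `ad X`: if `⁅X, B⁆` (resp. `⁅X, ⁅X, B⁆⁆`) commutes with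
`X`, then `exp (t • X) * B * exp (-(t • X))` is a polynomial of
degree one (resp. two) in `t`. Here `⁅X, H⁆` is a multiple of `sinh (h X)` and `⁅X, ⁅X, Y⁆⁆` a
multiple of `⁅X, H⁆`, so with `a = (h/2) X`, `c = cosh a`, `s = sinh a`, `ad H` acts on `c, s`
through `⁅H, c⁆ = sinh (2a) s`, `⁅H, s⁆ = sinh (2a) c`, and `s Y c - c Y s = ⁅a, Y⁆ = (h/2) H`.
The double-angle formulas `sinh (2a) = 2 s c`, `cosh (2a) = 2 c² - 1` and `c² - s² = 1` then
reduce the three relations to identities in the ring generated by `c`, `s`, `c⁻¹` and `Y`.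
-/

section Conjugation

variable {𝕂 A : Type*} [RCLike 𝕂] [NormedRing A] [NormedAlgebra 𝕂 A]

theorem eq_of_forall_hasDerivAt_zero {f : 𝕂 → A} (hf : ∀ t, HasDerivAt f 0 t) (t : 𝕂) :
    f t = f 0 :=
  is_const_of_deriv_eq_zero (fun t => (hf t).differentiableAt) (fun t => (hf t).deriv) t 0

variable [CompleteSpace A]

theorem hasDerivAt_exp_smul_mul_mul_exp_neg_smul (X B : A) (t : 𝕂) :
    HasDerivAt (fun t : 𝕂 => exp (t • X) * B * exp (-(t • X)))
      (exp (t • X) * ⁅X, B⁆ * exp (-(t • X))) t := by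
  have hexp_neg := hasDerivAt_exp_smul_const' (𝕂 := 𝕂) (-X) t
  simp only [smul_neg] at hexp_neg
  refine ((hasDerivAt_exp_smul_const X t).mul_const B).mul hexp_neg |>.congr_deriv ?_
  rw [Ring.lie_def]
  noncomm_ring

theorem exp_smul_mul_mul_exp_neg_smul_of_commute {X B : A} (h : Commute X B) (t : 𝕂) :
    exp (t • X) * B * exp (-(t • X)) = B := by
  have hderiv (t : 𝕂) :
      HasDerivAt (fun t : 𝕂 => exp (t • X) * B * exp (-(t • X))) 0 t := by
    simpa [h.lie_eq] using hasDerivAt_exp_smul_mul_mul_exp_neg_smul X B t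
  simpa using eq_of_forall_hasDerivAt_zero hderiv t

theorem exp_smul_mul_mul_exp_neg_smul_of_commute_lie {X B : A} (h : Commute X ⁅X, B⁆) (t : 𝕂) :
    exp (t • X) * B * exp (-(t • X)) = B + t • ⁅X, B⁆ := by
  have hderiv (t : 𝕂) :
      HasDerivAt (fun t : 𝕂 => exp (t • X) * B * exp (-(t • X)) - t • ⁅X, B⁆) 0 t := by
    refine (hasDerivAt_exp_smul_mul_mul_exp_neg_smul X B t).sub
      ((hasDerivAt_id t).smul_const ⁅X, B⁆) |>.congr_deriv ?_
    rw [exp_smul_mul_mul_exp_neg_smul_of_commute h, one_smul, sub_self]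
  have := eq_of_forall_hasDerivAt_zero hderiv t
  simp only [zero_smul, neg_zero, exp_zero, mul_one, one_mul, sub_zero] at this
  exact sub_eq_iff_eq_add.mp this

theorem exp_smul_mul_mul_exp_neg_smul_of_commute_lie_lie {X B : A} (h : Commute X ⁅X, ⁅X, B⁆⁆)
    (t : 𝕂) :
    exp (t • X) * B * exp (-(t • X)) = B + t • ⁅X, B⁆ + (t ^ 2 / 2) • ⁅X, ⁅X, B⁆⁆ := by
  have hderiv (t : 𝕂) : HasDerivAt (fun t : 𝕂 =>
      exp (t • X) * B * exp (-(t • X)) - t • ⁅X, B⁆ - (t ^ 2 / 2) • ⁅X, ⁅X, B⁆⁆) 0 t := by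
    refine ((hasDerivAt_exp_smul_mul_mul_exp_neg_smul X B t).sub
      ((hasDerivAt_id t).smul_const ⁅X, B⁆)).sub
      (((hasDerivAt_pow 2 t).div_const 2).smul_const ⁅X, ⁅X, B⁆⁆) |>.congr_deriv ?_
    rw [exp_smul_mul_mul_exp_neg_smul_of_commute_lie h]
    simp
  have := eq_of_forall_hasDerivAt_zero hderiv t
  simp only [zero_smul, neg_zero, exp_zero, mul_one, one_mul, sub_zero, ne_eq,
    OfNat.ofNat_ne_zero, not_false_eq_true, zero_pow, zero_div] at this
  rw [sub_eq_iff_eq_add, sub_eq_iff_eq_add] at this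
  rw [this, add_right_comm]

end Conjugation

section Hyperbolic

variable {A : Type*} [NormedRing A] [NormedAlgebra ℂ A] [CompleteSpace A]

theorem exp_mul_exp_neg (a : A) : exp a * exp (-a) = 1 := by
  simpa using exp_smul_mul_mul_exp_neg_smul_of_commute (𝕂 := ℂ) (Commute.one_right a) 1

theorem exp_neg_mul_exp (a : A) : exp (-a) * exp a = 1 := by
  simpa using exp_mul_exp_neg (-a)

theorem exp_two_smul (a : A) : exp ((2 : ℂ) • a) = exp a * exp a := by
  let _ := NormedAlgebra.restrictScalars ℚ ℂ A
  rw [two_smul, exp_add_of_commute (Commute.refl a)]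

theorem coshA_add_sinhA (a : A) : coshA a + sinhA a = exp a := by
  rw [coshA, sinhA]; module

theorem coshA_sub_sinhA (a : A) : coshA a - sinhA a = exp (-a) := by
  rw [coshA, sinhA]; module

theorem commute_coshA_sinhA (a : A) : Commute (coshA a) (sinhA a) := by
  have h : Commute (exp a) (exp (-a)) := (Commute.refl a).neg_right.exp_left.exp_right
  have h' : Commute (exp a + exp (-a)) (exp a - exp (-a)) :=
    ((Commute.refl _).add_left h.symm).sub_right (h.add_left (Commute.refl _))
  exact (h'.smul_left (2 : ℂ)⁻¹).smul_right (2 : ℂ)⁻¹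

theorem coshA_mul_self_sub_sinhA_mul_self (a : A) : coshA a * coshA a - sinhA a * sinhA a = 1 := by
  calc coshA a * coshA a - sinhA a * sinhA a = (coshA a + sinhA a) * (coshA a - sinhA a) := by
        rw [add_mul, mul_sub, mul_sub, (commute_coshA_sinhA a).eq]; abel
    _ = 1 := by rw [coshA_add_sinhA, coshA_sub_sinhA, exp_mul_exp_neg]

theorem sinhA_two_smul (a : A) : sinhA ((2 : ℂ) • a) = 2 * sinhA a * coshA a := by
  have hcs := (commute_coshA_sinhA a).eq
  rw [sinhA, ← smul_neg, exp_two_smul, exp_two_smul, ← coshA_add_sinhA, ← coshA_sub_sinhA]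
  rw [inv_smul_eq_iff₀ two_ne_zero, two_smul, two_mul]
  simp only [add_mul, mul_add, sub_mul, mul_sub, hcs]
  abel

theorem coshA_two_smul (a : A) : coshA ((2 : ℂ) • a) = 2 * coshA a * coshA a - 1 := by
  have hcs := (commute_coshA_sinhA a).eq
  have hpyth := coshA_mul_self_sub_sinhA_mul_self a
  rw [coshA, ← smul_neg, exp_two_smul, exp_two_smul, ← coshA_add_sinhA, ← coshA_sub_sinhA]
  rw [inv_smul_eq_iff₀ two_ne_zero, ← hpyth, two_smul, two_mul]
  simp only [add_mul, mul_add, sub_mul, mul_sub, hcs]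
  abel

theorem Commute.sinhA_right {a b : A} (h : Commute a b) : Commute a (sinhA b) :=
  ((h.exp_right).sub_right (h.neg_right.exp_right)).smul_right _

theorem lie_exp_of_commute_lie {a B : A} (h : Commute a ⁅B, a⁆) : ⁅B, exp a⁆ = ⁅B, a⁆ * exp a := by
  have hskew : ⁅a, B⁆ = -⁅B, a⁆ := (neg_sub _ _).symm
  have hconj := exp_smul_mul_mul_exp_neg_smul_of_commute_lie (𝕂 := ℂ) (hskew ▸ h.neg_right) 1
  rw [one_smul, one_smul, hskew] at hconj
  calc ⁅B, exp a⁆ = B * exp a - exp a * B * exp (-a) * exp a := by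
        rw [mul_assoc _ (exp (-a)), exp_neg_mul_exp, mul_one]; rfl
    _ = ⁅B, a⁆ * exp a := by rw [hconj]; noncomm_ring

theorem lie_exp_neg_of_commute_lie {a B : A} (h : Commute a ⁅B, a⁆) :
    ⁅B, exp (-a)⁆ = -(⁅B, a⁆ * exp (-a)) := by
  have hneg : ⁅B, -a⁆ = -⁅B, a⁆ := by simp only [Ring.lie_def]; noncomm_ring
  rw [lie_exp_of_commute_lie (hneg ▸ h.neg_left.neg_right), hneg, neg_mul]

theorem lie_coshA_of_commute_lie {a B : A} (h : Commute a ⁅B, a⁆) :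
    ⁅B, coshA a⁆ = ⁅B, a⁆ * sinhA a := by
  have hu := lie_exp_of_commute_lie h
  have hv := lie_exp_neg_of_commute_lie h
  simp only [Ring.lie_def] at hu hv ⊢
  rw [coshA, sinhA, mul_smul_comm, smul_mul_assoc, ← smul_sub, mul_smul_comm]
  congr 1
  calc B * (exp a + exp (-a)) - (exp a + exp (-a)) * B
      = (B * exp a - exp a * B) + (B * exp (-a) - exp (-a) * B) := by noncomm_ring
    _ = _ := by rw [hu, hv]; noncomm_ring

theorem lie_sinhA_of_commute_lie {a B : A} (h : Commute a ⁅B, a⁆) :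
    ⁅B, sinhA a⁆ = ⁅B, a⁆ * coshA a := by
  have hu := lie_exp_of_commute_lie h
  have hv := lie_exp_neg_of_commute_lie h
  simp only [Ring.lie_def] at hu hv ⊢
  rw [coshA, sinhA, mul_smul_comm, smul_mul_assoc, ← smul_sub, mul_smul_comm]
  congr 1
  calc B * (exp a - exp (-a)) - (exp a - exp (-a)) * B
      = (B * exp a - exp a * B) - (B * exp (-a) - exp (-a) * B) := by noncomm_ring
    _ = _ := by rw [hu, hv]; noncomm_ring

theorem sinhA_mul_mul_coshA_sub_coshA_mul_mul_sinhA {a B : A} (h : Commute a ⁅⁅a, B⁆, a⁆) :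
    sinhA a * B * coshA a - coshA a * B * sinhA a = ⁅a, B⁆ := by
  have hskew : ⁅a, ⁅a, B⁆⁆ = -⁅⁅a, B⁆, a⁆ := (neg_sub _ _).symm
  have hpos := exp_smul_mul_mul_exp_neg_smul_of_commute_lie_lie (𝕂 := ℂ) (hskew ▸ h.neg_right) 1
  have hneg := exp_smul_mul_mul_exp_neg_smul_of_commute_lie_lie (𝕂 := ℂ) (hskew ▸ h.neg_right) (-1)
  simp only [one_smul, neg_smul, neg_neg, one_pow, neg_one_sq] at hpos hneg
  have hdiff : exp a * B * exp (-a) - exp (-a) * B * exp a = (2 : ℂ) • ⁅a, B⁆ := by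
    rw [hpos, hneg, two_smul]; abel
  rw [← coshA_add_sinhA, ← coshA_sub_sinhA] at hdiff
  apply smul_right_injective A (two_ne_zero' ℂ)
  dsimp only
  rw [← hdiff, two_smul]
  noncomm_ring

end Hyperbolic

section Commutator

variable {A : Type*} [Ring A]

theorem Ring.lie_smul {R : Type*} [Monoid R] [DistribMulAction R A] [SMulCommClass R A A]
    [IsScalarTower R A A] (r : R) (x y : A) : ⁅x, r • y⁆ = r • ⁅x, y⁆ := by
  rw [Ring.lie_def, Ring.lie_def, mul_smul_comm, smul_mul_assoc, smul_sub]

theorem Ring.smul_lie {R : Type*} [Monoid R] [DistribMulAction R A] [SMulCommClass R A A]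
    [IsScalarTower R A A] (r : R) (x y : A) : ⁅r • x, y⁆ = r • ⁅x, y⁆ := by
  rw [Ring.lie_def, Ring.lie_def, mul_smul_comm, smul_mul_assoc, smul_sub]

variable {H Y c s : A}

theorem lie_inverse_mul_eq_two_mul (hc : IsUnit c) (hcs : Commute c s)
    (hpyth : c * c - s * s = 1) (hHc : ⁅H, c⁆ = 2 * s * c * s) (hHs : ⁅H, s⁆ = 2 * s * c * c) :
    ⁅H, Ring.inverse c * s⁆ = 2 * (Ring.inverse c * s) := by
  set T := Ring.inverse c * s
  have hcT : c * T = s := by rw [← mul_assoc, Ring.mul_inverse_cancel c hc, one_mul]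
  apply hc.mul_left_cancel
  have hcsT : c * (s * T) = s * s := by rw [← mul_assoc, hcs.eq, mul_assoc, hcT]
  calc c * ⁅H, T⁆ = ⁅H, c * T⁆ - ⁅H, c⁆ * T := by simp only [Ring.lie_def]; noncomm_ring
    _ = 2 * s * (c * c - c * (s * T)) := by rw [hcT, hHs, hHc]; noncomm_ring
    _ = 2 * s := by rw [hcsT, hpyth, mul_one]
    _ = c * (2 * T) := by rw [two_mul, two_mul, mul_add, hcT]

theorem lie_mul_mul_self_eq_neg_two_mul (hcs : Commute c s) (hpyth : c * c - s * s = 1)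
    (hHc : ⁅H, c⁆ = 2 * s * c * s) (hHY : ⁅H, Y⁆ = -(Y * (2 * c * c - 1) + (2 * c * c - 1) * Y)) :
    ⁅H, c * Y * c⁆ = -(2 * (c * Y * c)) := by
  have hss : s * s = c * c - 1 := by rw [← hpyth]; abel
  have hHc' : ⁅H, c⁆ = 2 * (c * c - 1) * c := by
    rw [hHc, mul_assoc _ c s, hcs.eq, ← hss]; noncomm_ring
  calc ⁅H, c * Y * c⁆ = ⁅H, c⁆ * Y * c + c * ⁅H, Y⁆ * c + c * Y * ⁅H, c⁆ := by
        simp only [Ring.lie_def]; noncomm_ring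
    _ = -(2 * (c * Y * c)) := by rw [hHc', hHY]; noncomm_ring

theorem lie_inverse_mul_mul_mul_self (hc : IsUnit c) (hcs : Commute c s) :
    ⁅Ring.inverse c * s, c * Y * c⁆ = s * Y * c - c * Y * s := by
  have hcT : c * (Ring.inverse c * s) = s := by
    rw [← mul_assoc, Ring.mul_inverse_cancel c hc, one_mul]
  have hTc : Ring.inverse c * s * c = s := by
    rw [mul_assoc, ← hcs.eq, ← mul_assoc, Ring.inverse_mul_cancel c hc, one_mul]
  calc ⁅Ring.inverse c * s, c * Y * c⁆
      = Ring.inverse c * s * c * Y * c - c * Y * (c * (Ring.inverse c * s)) := by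
        rw [Ring.lie_def]; noncomm_ring
    _ = s * Y * c - c * Y * s := by rw [hTc, hcT]

end Commutator

/-- In `U_h(sl(2))`, the elements `Z₊ = (2/h) tanh(hX/2)`, `Z₋ = cosh(hX/2) Y cosh(hX/2)`
and `H` satisfy the undeformed `sl(2)` relations. -/
theorem jordanian_nonlinear_sl2 {A : Type*} [NormedRing A] [NormedAlgebra ℂ A]
    [CompleteSpace A] (h : ℂ) (hh : h ≠ 0) (X Y H : A)
    (rel1 : X * Y - Y * X = H)
    (rel2 : H * X - X * H = (2 / h) • sinhA (h • X))
    (rel3 : H * Y - Y * H = -(Y * coshA (h • X) + coshA (h • X) * Y))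
    (hcosh : IsUnit (coshA ((h / 2) • X))) :
    H * ((2 / h) • tanhA ((h / 2) • X)) - ((2 / h) • tanhA ((h / 2) • X)) * H
        = (2 : ℂ) • ((2 / h) • tanhA ((h / 2) • X)) ∧
    H * (coshA ((h / 2) • X) * Y * coshA ((h / 2) • X))
        - (coshA ((h / 2) • X) * Y * coshA ((h / 2) • X)) * H
        = -((2 : ℂ) • (coshA ((h / 2) • X) * Y * coshA ((h / 2) • X))) ∧
    ((2 / h) • tanhA ((h / 2) • X)) * (coshA ((h / 2) • X) * Y * coshA ((h / 2) • X))
        - (coshA ((h / 2) • X) * Y * coshA ((h / 2) • X)) * ((2 / h) • tanhA ((h / 2) • X))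
        = H := by
  set a := (h / 2) • X with ha
  have hinv : h / 2 * (2 / h) = 1 := by field_simp
  have hX : h • X = (2 : ℂ) • a := by rw [ha, smul_smul, mul_div_cancel₀ h two_ne_zero]
  have hHa : ⁅H, a⁆ = sinhA ((2 : ℂ) • a) := by
    rw [ha, Ring.lie_smul, ← hX, Ring.lie_def, rel2, smul_smul, hinv, one_smul]
  have hcomm : Commute a ⁅H, a⁆ := hHa ▸ ((Commute.refl a).smul_right 2).sinhA_right
  have haY : ⁅a, Y⁆ = (h / 2) • H := by rw [ha, Ring.smul_lie, Ring.lie_def, rel1]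
  have hsYc := sinhA_mul_mul_coshA_sub_coshA_mul_mul_sinhA (a := a) (B := Y)
    (by rw [haY, Ring.smul_lie]; exact hcomm.smul_right _)
  have hHc := lie_coshA_of_commute_lie hcomm
  have hHs := lie_sinhA_of_commute_lie hcomm
  rw [hHa, sinhA_two_smul] at hHc hHs
  rw [hX, coshA_two_smul] at rel3
  have hcs := commute_coshA_sinhA a
  have hpyth := coshA_mul_self_sub_sinhA_mul_self a
  refine ⟨?_, ?_, ?_⟩
  · change ⁅H, (2 / h) • tanhA a⁆ = _
    rw [Ring.lie_smul, tanhA, lie_inverse_mul_eq_two_mul hcosh hcs hpyth hHc hHs, two_mul,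
      ← two_smul ℂ, smul_comm]
  · change ⁅H, coshA a * Y * coshA a⁆ = _
    rw [two_smul, ← two_mul]
    exact lie_mul_mul_self_eq_neg_two_mul hcs hpyth hHc rel3
  · change ⁅(2 / h) • tanhA a, coshA a * Y * coshA a⁆ = H
    rw [Ring.smul_lie, tanhA, lie_inverse_mul_mul_mul_self hcosh hcs, hsYc, haY, smul_smul,
      mul_comm, hinv, one_smul]
end

section
/- The coproduct Δ defined on generators of U_h(sl(2)) by Δ(X)=X⊗1+1⊗X, Δ(Y)=Y⊗e^{hX}+e^{-hX}⊗Y, Δ(H)=H⊗e^{hX}+e^{-hX}⊗H is an algebra homomorphism, i.e., [Δ(X),Δ(Y)]=Δ(H), [Δ(H),Δ(X)]=(2/h)sinh(hΔ(X)), and [Δ(H),Δ(Y)]=-Δ(Y)cosh(hΔ(X))-cosh(hΔ(X))Δ(Y). -/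
open NormedSpace

open scoped TensorProduct

/-!
Write `E = exp(hX)`, so that `sinh(hX)` and `cosh(hX)` are `(E ∓ E⁻¹)/2`. The relations give
`[hX, Y] = hH` and `[hX, H] = E⁻¹ - E`, which commutes with `X`; hence `ad(hX)` is nilpotent on
`H` and `Y`, and conjugation by `E = exp(hX)`, which is `exp(ad(hX))`, is a finite sum there.
This yields the normal-ordering rules `E H = H E - E² + 1` and `E Y = Y E + h H E + (h/2)(1 - E²)`,
and the same rules for `E⁻¹ = exp(-hX)` by `h ↦ -h`, which leaves the relations unchanged.
With these rules both sides of each relation for the coproduct reduce to the same normal form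
in `A ⊗ A`.
-/

theorem exp_mul_exp_neg_s3 (𝕂 : Type*) {A : Type*} [RCLike 𝕂] [NormedRing A] [NormedAlgebra 𝕂 A]
    [CompleteSpace A] (x : A) : exp x * exp (-x) = 1 := by
  let := NormedAlgebra.restrictScalars ℚ 𝕂 A
  rw [← exp_add_of_commute (Commute.refl x).neg_right, add_neg_cancel, exp_zero]

theorem exp_neg_mul_exp_s3 (𝕂 : Type*) {A : Type*} [RCLike 𝕂] [NormedRing A] [NormedAlgebra 𝕂 A]
    [CompleteSpace A] (x : A) : exp (-x) * exp x = 1 := by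
  simpa using exp_mul_exp_neg_s3 𝕂 (-x)

theorem exp_mul_eq_of_commutators {𝕂 A : Type*} [RCLike 𝕂] [NormedRing A] [NormedAlgebra 𝕂 A]
    [CompleteSpace A] {x b c d : A}
    (hc : x * b - b * x = c) (hd : x * c - c * x = d) (h0 : x * d - d * x = 0) :
    exp x * b = (b + c + (2 : 𝕂)⁻¹ • d) * exp x := by
  let P : 𝕂 → A := fun t => b + t • c + (t ^ 2 / 2) • d
  have hP : ∀ t, HasDerivAt P (c + t • d) t := fun t => by
    have hsq : HasDerivAt (fun t : 𝕂 => t ^ 2 / 2) t t := by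
      simpa using (hasDerivAt_pow 2 t).div_const 2
    simpa using (((hasDerivAt_id t).smul_const c).const_add b).fun_add (hsq.smul_const d)
  have hcomm : ∀ t, x * P t - P t * x = c + t • d := fun t => by
    calc x * P t - P t * x
        = (x * b - b * x) + t • (x * c - c * x) + (t ^ 2 / 2) • (x * d - d * x) := by
          simp only [P, mul_add, add_mul, mul_smul_comm, smul_mul_assoc, smul_sub]
          abel
      _ = c + t • d := by rw [hc, hd, h0, smul_zero, add_zero]
  -- `exp (-t x) P(t) exp (t x)` is constant because `P' = [x, P]`.
  let f : 𝕂 → A := fun t => exp (t • -x) * (P t * exp (t • x))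
  have hf : ∀ t, HasDerivAt f 0 t := fun t => by
    refine ((hasDerivAt_exp_smul_const (-x) t).fun_mul
      ((hP t).fun_mul (hasDerivAt_exp_smul_const' x t))).congr_deriv ?_
    rw [← hcomm t]
    noncomm_ring
  have hconst : f 1 = f 0 :=
    is_const_of_deriv_eq_zero (fun t => (hf t).differentiableAt) (fun t => (hf t).deriv) 1 0
  simp only [f, P, one_smul, zero_smul, one_pow, zero_pow two_ne_zero, zero_div, exp_zero,
    add_zero, one_mul, mul_one, one_div] at hconst
  conv_lhs => rw [← hconst, ← mul_assoc, exp_mul_exp_neg_s3 𝕂, one_mul]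

theorem commutator_exp_neg_sub_exp {A : Type*} [NormedRing A] (x : A) :
    x * (exp (-x) - exp x) - (exp (-x) - exp x) * x = 0 :=
  sub_eq_zero.mpr ((Commute.refl x).neg_right.exp_right.sub_right (Commute.refl x).exp_right).eq

theorem mul_smul_sub_smul_mul {K A : Type*} [CommSemiring K] [Ring A] [Algebra K A]
    (k : K) (x b : A) : x * (k • b) - (k • b) * x = k • (x * b - b * x) := by
  rw [mul_smul_comm, smul_mul_assoc, smul_sub]

section Conjugation

variable {A : Type*} [NormedRing A] [NormedAlgebra ℂ A] [CompleteSpace A]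

theorem sinhA_neg (a : A) : sinhA (-a) = -sinhA a := by
  rw [sinhA, sinhA, neg_neg, ← smul_neg, neg_sub]

variable {h : ℂ} {X Y H : A}

theorem commutator_smul_X_H (hh : h ≠ 0) (rel2 : H * X - X * H = (2 / h) • sinhA (h • X)) :
    (h • X) * H - H * (h • X) = exp (-(h • X)) - exp (h • X) := by
  have hscalar : h * (2 / h * (2 : ℂ)⁻¹) = 1 := by field_simp
  rw [smul_mul_assoc, mul_smul_comm, ← smul_sub, ← neg_sub, rel2, sinhA, smul_smul, smul_neg,
    smul_smul, hscalar, one_smul, neg_sub]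

theorem exp_smul_mul_H (hh : h ≠ 0) (rel2 : H * X - X * H = (2 / h) • sinhA (h • X)) :
    exp (h • X) * H = H * exp (h • X) - exp (h • X) * exp (h • X) + 1 := by
  rw [exp_mul_eq_of_commutators (𝕂 := ℂ) (commutator_smul_X_H hh rel2)
    (commutator_exp_neg_sub_exp _) (by simp), smul_zero, add_zero, add_mul, sub_mul,
    exp_neg_mul_exp_s3 ℂ]
  abel

theorem exp_smul_mul_Y (hh : h ≠ 0) (rel1 : X * Y - Y * X = H)
    (rel2 : H * X - X * H = (2 / h) • sinhA (h • X)) :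
    exp (h • X) * Y
      = Y * exp (h • X) + h • (H * exp (h • X)) + (h / 2) • (1 - exp (h • X) * exp (h • X)) := by
  have hXY : (h • X) * Y - Y * (h • X) = h • H := by
    rw [smul_mul_assoc, mul_smul_comm, ← smul_sub, rel1]
  have hXH : (h • X) * (h • H) - (h • H) * (h • X) = h • (exp (-(h • X)) - exp (h • X)) := by
    rw [mul_smul_sub_smul_mul, commutator_smul_X_H hh rel2]
  have hXE : (h • X) * (h • (exp (-(h • X)) - exp (h • X)))
      - (h • (exp (-(h • X)) - exp (h • X))) * (h • X) = 0 := by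
    rw [mul_smul_sub_smul_mul, commutator_exp_neg_sub_exp, smul_zero]
  rw [exp_mul_eq_of_commutators (𝕂 := ℂ) hXY hXH hXE, smul_smul, add_mul, add_mul, smul_mul_assoc,
    smul_mul_assoc, sub_mul, exp_neg_mul_exp_s3 ℂ, smul_sub, smul_sub, inv_mul_eq_div]

end Conjugation

section Coproduct

variable {A : Type*} [Ring A] {E F X Y H : A}

theorem coproduct_commutator_X_Y {K : Type*} [CommRing K] [Algebra K A]
    (hXE : Commute X E) (hXF : Commute X F) (rel1 : X * Y - Y * X = H) :
    (X ⊗ₜ[K] (1 : A) + 1 ⊗ₜ X) * (Y ⊗ₜ E + F ⊗ₜ Y) - (Y ⊗ₜ E + F ⊗ₜ Y) * (X ⊗ₜ 1 + 1 ⊗ₜ X)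
      = H ⊗ₜ E + F ⊗ₜ H := by
  simp only [mul_add, add_mul, Algebra.TensorProduct.tmul_mul_tmul, one_mul, mul_one, hXE.eq,
    hXF.eq, sub_eq_iff_eq_add'.mp rel1, TensorProduct.add_tmul, TensorProduct.tmul_add]
  abel

variable {K : Type*} [Field K] [CharZero K] [Algebra K A]

theorem coproduct_commutator_H_X (h : K) (hXE : Commute X E) (hXF : Commute X F)
    (rel2 : H * X - X * H = (2 / h) • ((2 : K)⁻¹ • (E - F))) :
    (H ⊗ₜ[K] E + F ⊗ₜ H) * (X ⊗ₜ (1 : A) + 1 ⊗ₜ X) - (X ⊗ₜ 1 + 1 ⊗ₜ X) * (H ⊗ₜ E + F ⊗ₜ H)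
      = (2 / h) • ((2 : K)⁻¹ • (E - F) ⊗ₜ ((2 : K)⁻¹ • (E + F))
          + (2 : K)⁻¹ • (E + F) ⊗ₜ ((2 : K)⁻¹ • (E - F))) := by
  simp only [mul_add, add_mul, Algebra.TensorProduct.tmul_mul_tmul, one_mul, mul_one, hXE.eq,
    hXF.eq, sub_eq_iff_eq_add'.mp rel2, TensorProduct.add_tmul, TensorProduct.tmul_add,
    TensorProduct.sub_tmul, TensorProduct.tmul_sub, TensorProduct.smul_tmul,
    TensorProduct.tmul_smul, smul_add, smul_sub]
  module

theorem coproduct_commutator_H_Y (h : K) (hEF : E * F = 1) (hFE : F * E = 1)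
    (hEH : E * H = H * E - E * E + 1) (hFH : F * H = H * F - F * F + 1)
    (hEY : E * Y = Y * E + h • (H * E) + (h / 2) • (1 - E * E))
    (hFY : F * Y = Y * F + (-h) • (H * F) + (-h / 2) • (1 - F * F))
    (rel3 : H * Y - Y * H = -(Y * ((2 : K)⁻¹ • (E + F)) + (2 : K)⁻¹ • (E + F) * Y)) :
    (H ⊗ₜ[K] E + F ⊗ₜ H) * (Y ⊗ₜ E + F ⊗ₜ Y) - (Y ⊗ₜ E + F ⊗ₜ Y) * (H ⊗ₜ E + F ⊗ₜ H)
      = -((Y ⊗ₜ E + F ⊗ₜ Y)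
            * ((2 : K)⁻¹ • (E + F) ⊗ₜ ((2 : K)⁻¹ • (E + F))
              + (2 : K)⁻¹ • (E - F) ⊗ₜ ((2 : K)⁻¹ • (E - F)))
          + ((2 : K)⁻¹ • (E + F) ⊗ₜ ((2 : K)⁻¹ • (E + F))
              + (2 : K)⁻¹ • (E - F) ⊗ₜ ((2 : K)⁻¹ • (E - F))) * (Y ⊗ₜ E + F ⊗ₜ Y)) := by
  simp only [mul_add, add_mul, sub_mul, mul_sub, smul_mul_assoc, mul_smul_comm, smul_smul,
    Algebra.TensorProduct.tmul_mul_tmul, smul_add, smul_sub, TensorProduct.add_tmul,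
    TensorProduct.tmul_add, TensorProduct.sub_tmul, TensorProduct.tmul_sub,
    TensorProduct.smul_tmul, TensorProduct.tmul_smul, neg_add, mul_neg,
    TensorProduct.neg_tmul, TensorProduct.tmul_neg, hEH, hFH, hEY, hFY,
    sub_eq_iff_eq_add'.mp rel3, hEF, hFE]
  module

end Coproduct

/-- The coproduct of `U_h(sl(2))` preserves the defining relations, i.e. it is an algebra
homomorphism.  Since `X ⊗ 1` and `1 ⊗ X` commute, one has
`sinh(hΔ(X)) = sinh(hX)⊗cosh(hX) + cosh(hX)⊗sinh(hX)` and
`cosh(hΔ(X)) = cosh(hX)⊗cosh(hX) + sinh(hX)⊗sinh(hX)`. -/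
theorem jordanian_coproduct_hom {A : Type*} [NormedRing A] [NormedAlgebra ℂ A]
    [CompleteSpace A] (h : ℂ) (hh : h ≠ 0) (X Y H : A)
    (rel1 : X * Y - Y * X = H)
    (rel2 : H * X - X * H = (2 / h) • sinhA (h • X))
    (rel3 : H * Y - Y * H = -(Y * coshA (h • X) + coshA (h • X) * Y)) :
    let ΔX : A ⊗[ℂ] A := X ⊗ₜ 1 + 1 ⊗ₜ X
    let ΔY : A ⊗[ℂ] A := Y ⊗ₜ exp (h • X) + exp (-(h • X)) ⊗ₜ Y
    let ΔH : A ⊗[ℂ] A := H ⊗ₜ exp (h • X) + exp (-(h • X)) ⊗ₜ H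
    let ΔsinhhX : A ⊗[ℂ] A := sinhA (h • X) ⊗ₜ coshA (h • X) + coshA (h • X) ⊗ₜ sinhA (h • X)
    let ΔcoshhX : A ⊗[ℂ] A := coshA (h • X) ⊗ₜ coshA (h • X) + sinhA (h • X) ⊗ₜ sinhA (h • X)
    ΔX * ΔY - ΔY * ΔX = ΔH ∧
    ΔH * ΔX - ΔX * ΔH = (2 / h) • ΔsinhhX ∧
    ΔH * ΔY - ΔY * ΔH = -(ΔY * ΔcoshhX + ΔcoshhX * ΔY) := by
  intro ΔX ΔY ΔH ΔsinhhX ΔcoshhX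
  have hXE : Commute X (exp (h • X)) := ((Commute.refl X).smul_right h).exp_right
  have hXF : Commute X (exp (-(h • X))) := ((Commute.refl X).smul_right h).neg_right.exp_right
  have rel2_neg : H * X - X * H = (2 / -h) • sinhA ((-h) • X) := by
    rwa [neg_smul, sinhA_neg, div_neg, neg_smul_neg]
  have hFH := exp_smul_mul_H (neg_ne_zero.mpr hh) rel2_neg
  have hFY := exp_smul_mul_Y (neg_ne_zero.mpr hh) rel1 rel2_neg
  rw [neg_smul] at hFH hFY
  exact ⟨coproduct_commutator_X_Y hXE hXF rel1, coproduct_commutator_H_X h hXE hXF rel2,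
    coproduct_commutator_H_Y h (exp_mul_exp_neg_s3 ℂ _) (exp_neg_mul_exp_s3 ℂ _)
      (exp_smul_mul_H hh rel2) hFH (exp_smul_mul_Y hh rel1 rel2) hFY rel3⟩
end

section
/- The map S defined on generators of U_h(sl(2)) by S(X)=-X, S(Y)=-e^{hX} Y e^{-hX}, S(H)=-e^{hX} H e^{-hX}, extended as an algebra anti-homomorphism, preserves the defining relations, i.e., S([X,Y])=[S(Y),S(X)], S([H,X])=[S(X),S(H)], and S([H,Y])=[S(Y),S(H)]. -/
open NormedSpace

/-- The antipode candidate `S(X) = -X`, `S(Y) = -e^{hX} Y e^{-hX}`, `S(H) = -e^{hX} H e^{-hX}`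
of `U_h(sl(2))`, extended as an algebra anti-homomorphism, preserves the defining relations:
the reversed relations hold for the images of the generators. -/
theorem jordanian_antipode_antihom {A : Type*} [NormedRing A] [NormedAlgebra ℂ A]
    [CompleteSpace A] (h : ℂ) (hh : h ≠ 0) (X Y H : A)
    (rel1 : X * Y - Y * X = H)
    (rel2 : H * X - X * H = (2 / h) • sinhA (h • X))
    (rel3 : H * Y - Y * H = -(Y * coshA (h • X) + coshA (h • X) * Y)) :
    let sX : A := -X
    let sY : A := -(exp (h • X) * Y * exp (-(h • X)))
    let sH : A := -(exp (h • X) * H * exp (-(h • X)))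
    -- S([X,Y]) = [S(Y),S(X)]
    sY * sX - sX * sY = sH ∧
    -- S([H,X]) = [S(X),S(H)]
    sX * sH - sH * sX = (2 / h) • sinhA (h • sX) ∧
    -- S([H,Y]) = [S(Y),S(H)]
    sY * sH - sH * sY = -(coshA (h • sX) * sY + sY * coshA (h • sX)) := by
  intro sX sY sH
  set E := exp (h • X) with hE
  set F := exp (-(h • X)) with hF
  have hc : Commute (h • X) (-(h • X)) := (Commute.refl _).neg_right
  have hEF : E * F = 1 := by
    rw [hE, hF, ← exp_add_of_commute_of_mem_ball (𝕂 := ℂ) hc ((expSeries_radius_eq_top ℂ A).symm ▸ edist_lt_top _ _) ((expSeries_radius_eq_top ℂ A).symm ▸ edist_lt_top _ _), add_neg_cancel, exp_zero]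
  have hFE : F * E = 1 := by
    rw [hE, hF, ← exp_add_of_commute_of_mem_ball (𝕂 := ℂ) hc.symm ((expSeries_radius_eq_top ℂ A).symm ▸ edist_lt_top _ _) ((expSeries_radius_eq_top ℂ A).symm ▸ edist_lt_top _ _), neg_add_cancel, exp_zero]
  -- conjugation is multiplicative
  have cmul : ∀ a b : A, (E * a * F) * (E * b * F) = E * (a * b) * F := by
    intro a b
    have h1 : F * (E * (b * F)) = b * F := by rw [← mul_assoc, hFE, one_mul]
    simp only [mul_assoc, h1]
  -- X commutes with E and F
  have hXE : Commute X E := ((Commute.refl X).smul_right h).exp_right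
  have hXF : Commute X F := (((Commute.refl X).smul_right h).neg_right).exp_right
  have cX : E * X * F = X := by
    rw [(hXE.symm).eq, mul_assoc, hEF, mul_one]
  -- conjugation fixes sinh and cosh of h • X
  have cS : E * sinhA (h • X) * F = sinhA (h • X) := by
    rw [sinhA, ← hE, ← hF, mul_smul_comm, smul_mul_assoc]
    congr 1
    rw [mul_sub, sub_mul, hEF, one_mul, mul_assoc, hEF, mul_one]
  have cC : E * coshA (h • X) * F = coshA (h • X) := by
    rw [coshA, ← hE, ← hF, mul_smul_comm, smul_mul_assoc]
    congr 1
    rw [mul_add, add_mul, hEF, one_mul, mul_assoc, hEF, mul_one]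
  have sinh_neg : sinhA (-(h • X)) = -sinhA (h • X) := by
    rw [sinhA, sinhA, neg_neg, ← neg_sub (exp (h • X)) (exp (-(h • X))), smul_neg]
  have cosh_neg : coshA (-(h • X)) = coshA (h • X) := by
    rw [coshA, coshA, neg_neg, add_comm]
  refine ⟨?_, ?_, ?_⟩
  · -- first relation
    show -(E * Y * F) * -X - -X * -(E * Y * F) = -(E * H * F)
    rw [neg_mul_neg, neg_mul_neg]
    calc E * Y * F * X - X * (E * Y * F)
        = (E * Y * F) * (E * X * F) - (E * X * F) * (E * Y * F) := by rw [cX]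
      _ = E * (Y * X) * F - E * (X * Y) * F := by rw [cmul, cmul]
      _ = E * (Y * X - X * Y) * F := by rw [mul_sub, sub_mul]
      _ = E * (-H) * F := by rw [← rel1, neg_sub]
      _ = -(E * H * F) := by rw [mul_neg, neg_mul]
  · -- second relation
    show -X * -(E * H * F) - -(E * H * F) * -X = (2 / h) • sinhA (h • (-X))
    rw [neg_mul_neg, neg_mul_neg, smul_neg, sinh_neg, smul_neg]
    calc X * (E * H * F) - E * H * F * X
        = (E * X * F) * (E * H * F) - (E * H * F) * (E * X * F) := by rw [cX]
      _ = E * (X * H) * F - E * (H * X) * F := by rw [cmul, cmul]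
      _ = E * (X * H - H * X) * F := by rw [mul_sub, sub_mul]
      _ = E * (-((2 / h) • sinhA (h • X))) * F := by rw [← neg_sub, rel2]
      _ = -((2 / h) • (E * sinhA (h • X) * F)) := by
          rw [mul_neg, neg_mul, mul_smul_comm, smul_mul_assoc]
      _ = -((2 / h) • sinhA (h • X)) := by rw [cS]
  · -- third relation
    show -(E * Y * F) * -(E * H * F) - -(E * H * F) * -(E * Y * F) =
      -(coshA (h • (-X)) * -(E * Y * F) + -(E * Y * F) * coshA (h • (-X)))
    rw [neg_mul_neg, neg_mul_neg, smul_neg, cosh_neg, mul_neg, neg_mul, ← neg_add,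
      neg_neg]
    calc (E * Y * F) * (E * H * F) - (E * H * F) * (E * Y * F)
        = E * (Y * H) * F - E * (H * Y) * F := by rw [cmul, cmul]
      _ = E * (Y * H - H * Y) * F := by rw [mul_sub, sub_mul]
      _ = E * (Y * coshA (h • X) + coshA (h • X) * Y) * F := by
          rw [← neg_sub, rel3, neg_neg]
      _ = (E * Y * F) * (E * coshA (h • X) * F)
          + (E * coshA (h • X) * F) * (E * Y * F) := by
          rw [cmul, cmul, mul_add, add_mul]
      _ = (E * Y * F) * coshA (h • X) + coshA (h • X) * (E * Y * F) := by rw [cC]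
      _ = coshA (h • X) * (E * Y * F) + E * Y * F * coshA (h • X) := by rw [add_comm]
end

section
/- In the two-mode fermion realization of U_h(sl(2)) given by H=J₀, X=(2/h)arctanh((h/2)J₊), Y=√(1-((h/2)J₊)²) J₋ √(1-((h/2)J₊)²) with J₊=a₁†a₂†, J₋=a₂a₁, J₀=N₁+N₂-1 (note J₊²=0, so X=J₊ and Y=J₋ exactly), the operators t_{1/2,1/2}=-a₁† and t_{1/2,-1/2}=-a₂+h(N₂-1)a₁† form a rank-1/2 tensor operator: ad X(t)=[X,t], ad Y(t)=e^{-hX}[e^{hX}Y,t]e^{-hX}, ad H(t)=e^{-hX}[e^{hX}H,t]e^{-hX} act on (t_{1/2,1/2}, t_{1/2,-1/2}) by the spin-1/2 representation matrices X=[[0,1],[0,0]], Y=[[0,0],[1,0]], H=[[1,0],[0,-1]], i.e., ad X(t_{1/2,1/2})=0, ad X(t_{1/2,-1/2})=t_{1/2,1/2}, ad Y(t_{1/2,1/2})=t_{1/2,-1/2}, ad Y(t_{1/2,-1/2})=0, ad H(t_{1/2,±1/2})=±t_{1/2,±1/2}. -/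
/-- The pair `t_{1/2,1/2} = -a₁†`, `t_{1/2,-1/2} = -a₂ + h(N₂-1)a₁†` is a rank-1/2 tensor
operator for the two-mode fermion realization of `U_h(sl(2))`. -/
theorem fermion_tensor_operator_first {A : Type*} [Ring A] [Algebra ℂ A] (h : ℂ)
    (a1 a2 ad1 ad2 : A)
    (h11 : a1 * ad1 + ad1 * a1 = 1) (h22 : a2 * ad2 + ad2 * a2 = 1)
    (h12 : a1 * ad2 + ad2 * a1 = 0) (h21 : a2 * ad1 + ad1 * a2 = 0)
    (haa : a1 * a2 + a2 * a1 = 0) (hdd : ad1 * ad2 + ad2 * ad1 = 0)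
    (ha1 : a1 * a1 = 0) (ha2 : a2 * a2 = 0)
    (hd1 : ad1 * ad1 = 0) (hd2 : ad2 * ad2 = 0) :
    -- the fermion realization X = J₊, Y = J₋, H = N₁ + N₂ - 1 of U_h(sl(2)),
    -- with e^{±hX} = 1 ± hX since X² = 0
    let X : A := ad1 * ad2
    let Y : A := a2 * a1
    let H : A := ad1 * a1 + ad2 * a2 - 1
    let eX : A := 1 + h • X
    let emX : A := 1 - h • X
    -- the adjoint action of the generators of U_h(sl(2))
    let adX : A → A := fun t => X * t - t * X
    let adY : A → A := fun t => emX * (eX * Y * t - t * (eX * Y)) * emX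
    let adH : A → A := fun t => emX * (eX * H * t - t * (eX * H)) * emX
    -- the rank-1/2 tensor operator components
    let tp : A := -ad1
    let tm : A := -a2 + h • ((ad2 * a2 - 1) * ad1)
    adX tp = 0 ∧ adX tm = tp ∧
    adY tp = tm ∧ adY tm = 0 ∧
    adH tp = tp ∧ adH tm = -tm := by
  have r11 : ∀ x : A, a1 * (ad1 * x) = x - ad1 * (a1 * x) := by
    intro x; have := congrArg (· * x) h11; simp only [add_mul, mul_assoc, one_mul] at this
    exact eq_sub_of_add_eq this
  have r22 : ∀ x : A, a2 * (ad2 * x) = x - ad2 * (a2 * x) := by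
    intro x; have := congrArg (· * x) h22; simp only [add_mul, mul_assoc, one_mul] at this
    exact eq_sub_of_add_eq this
  have r12 : ∀ x : A, a1 * (ad2 * x) = - (ad2 * (a1 * x)) := by
    intro x; have := congrArg (· * x) h12; simp only [add_mul, mul_assoc, zero_mul] at this
    exact eq_neg_of_add_eq_zero_left this
  have r21 : ∀ x : A, a2 * (ad1 * x) = - (ad1 * (a2 * x)) := by
    intro x; have := congrArg (· * x) h21; simp only [add_mul, mul_assoc, zero_mul] at this
    exact eq_neg_of_add_eq_zero_left this
  have raa : ∀ x : A, a2 * (a1 * x) = - (a1 * (a2 * x)) := by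
    intro x; have := congrArg (· * x) haa; simp only [add_mul, mul_assoc, zero_mul] at this
    exact eq_neg_of_add_eq_zero_right this
  have rdd : ∀ x : A, ad2 * (ad1 * x) = - (ad1 * (ad2 * x)) := by
    intro x; have := congrArg (· * x) hdd; simp only [add_mul, mul_assoc, zero_mul] at this
    exact eq_neg_of_add_eq_zero_right this
  have s1 : ∀ x : A, a1 * (a1 * x) = 0 := by
    intro x; rw [← mul_assoc, ha1, zero_mul]
  have s2 : ∀ x : A, a2 * (a2 * x) = 0 := by
    intro x; rw [← mul_assoc, ha2, zero_mul]
  have sd1 : ∀ x : A, ad1 * (ad1 * x) = 0 := by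
    intro x; rw [← mul_assoc, hd1, zero_mul]
  have sd2 : ∀ x : A, ad2 * (ad2 * x) = 0 := by
    intro x; rw [← mul_assoc, hd2, zero_mul]
  have r11' : a1 * ad1 = 1 - ad1 * a1 := eq_sub_of_add_eq h11
  have r22' : a2 * ad2 = 1 - ad2 * a2 := eq_sub_of_add_eq h22
  have r12' : a1 * ad2 = - (ad2 * a1) := eq_neg_of_add_eq_zero_left h12
  have r21' : a2 * ad1 = - (ad1 * a2) := eq_neg_of_add_eq_zero_left h21
  have raa' : a2 * a1 = - (a1 * a2) := eq_neg_of_add_eq_zero_right haa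
  have rdd' : ad2 * ad1 = - (ad1 * ad2) := eq_neg_of_add_eq_zero_right hdd
  refine ⟨?_, ?_, ?_, ?_, ?_, ?_⟩ <;>
  · simp only [mul_assoc, mul_sub, sub_mul, mul_add, add_mul, mul_one, one_mul,
      mul_neg, neg_mul, smul_mul_assoc, mul_smul_comm, smul_smul, smul_sub, smul_add,
      smul_neg, sub_smul, add_smul, neg_smul,
      r11, r22, r12, r21, raa, rdd, s1, s2, sd1, sd2,
      r11', r22', r12', r21', raa', rdd', ha1, ha2, hd1, hd2,
      mul_zero, zero_mul, smul_zero, zero_smul, sub_zero, zero_sub, add_zero, zero_add, neg_neg,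
      neg_zero]
    try module
end

section
/- With the same two-mode fermion realization of U_h(sl(2)) (X=J₊=a₁†a₂†, Y=J₋=a₂a₁, H=N₁+N₂-1), the pair t_{1/2,1/2}=a₂† and t_{1/2,-1/2}=-a₁-h(N₁-1)a₂† also forms a rank-1/2 tensor operator under the adjoint actions ad X(t)=[X,t], ad Y(t)=e^{-hX}[e^{hX}Y,t]e^{-hX}, ad H(t)=e^{-hX}[e^{hX}H,t]e^{-hX}. -/
section
variable {A : Type*} [Ring A]

private lemma swap1 {r s : A} (hc : r * s + s * r = 1) (x : A) :
    r * (s * x) = x - s * (r * x) := by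
  have h : r * s = 1 - s * r := by
    rw [add_comm] at hc; exact (eq_sub_of_add_eq' hc)
  rw [← mul_assoc, h, sub_mul, one_mul, mul_assoc]

private lemma swap1' {r s : A} (hc : r * s + s * r = 1) :
    r * s = 1 - s * r := by
  rw [add_comm] at hc; exact (eq_sub_of_add_eq' hc)

private lemma swap0 {r s : A} (hc : r * s + s * r = 0) (x : A) :
    r * (s * x) = -(s * (r * x)) := by
  have h : r * s = -(s * r) := eq_neg_of_add_eq_zero_left hc
  rw [← mul_assoc, h, neg_mul, mul_assoc]

private lemma swap0' {r s : A} (hc : r * s + s * r = 0) :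
    r * s = -(s * r) := eq_neg_of_add_eq_zero_left hc

private lemma sq0 {r : A} (hr : r * r = 0) (x : A) : r * (r * x) = 0 := by
  rw [← mul_assoc, hr, zero_mul]

end

/-- The pair `t_{1/2,1/2} = a₂†`, `t_{1/2,-1/2} = -a₁ - h(N₁-1)a₂†` is also a rank-1/2 tensor
operator for the two-mode fermion realization of `U_h(sl(2))`. -/
theorem fermion_tensor_operator_second {A : Type*} [Ring A] [Algebra ℂ A] (h : ℂ)
    (a1 a2 ad1 ad2 : A)
    (h11 : a1 * ad1 + ad1 * a1 = 1) (h22 : a2 * ad2 + ad2 * a2 = 1)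
    (h12 : a1 * ad2 + ad2 * a1 = 0) (h21 : a2 * ad1 + ad1 * a2 = 0)
    (haa : a1 * a2 + a2 * a1 = 0) (hdd : ad1 * ad2 + ad2 * ad1 = 0)
    (ha1 : a1 * a1 = 0) (ha2 : a2 * a2 = 0)
    (hd1 : ad1 * ad1 = 0) (hd2 : ad2 * ad2 = 0) :
    -- the fermion realization X = J₊, Y = J₋, H = N₁ + N₂ - 1 of U_h(sl(2)),
    -- with e^{±hX} = 1 ± hX since X² = 0
    let X : A := ad1 * ad2
    let Y : A := a2 * a1
    let H : A := ad1 * a1 + ad2 * a2 - 1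
    let eX : A := 1 + h • X
    let emX : A := 1 - h • X
    -- the adjoint action of the generators of U_h(sl(2))
    let adX : A → A := fun t => X * t - t * X
    let adY : A → A := fun t => emX * (eX * Y * t - t * (eX * Y)) * emX
    let adH : A → A := fun t => emX * (eX * H * t - t * (eX * H)) * emX
    -- the rank-1/2 tensor operator components
    let tp : A := ad2
    let tm : A := -a1 - h • ((ad1 * a1 - 1) * ad2)
    adX tp = 0 ∧ adX tm = tp ∧
    adY tp = tm ∧ adY tm = 0 ∧
    adH tp = tp ∧ adH tm = -tm := by
  intro X Y H eX emX adX adY adH tp tm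
  refine ⟨?_, ?_, ?_, ?_, ?_, ?_⟩ <;>
  · simp only [X, Y, H, eX, emX, adX, adY, adH, tp, tm,
      mul_add, add_mul, mul_sub, sub_mul, mul_neg, neg_mul, mul_one, one_mul,
      smul_mul_assoc, mul_smul_comm, smul_smul, smul_sub, smul_add, smul_neg,
      mul_assoc,
      swap1 h11, swap1 h22, swap0 h12, swap0 h21, swap0 haa, swap0 hdd,
      swap1' h11, swap1' h22, swap0' h12, swap0' h21, swap0' haa, swap0' hdd,
      sq0 ha1, sq0 ha2, sq0 hd1, sq0 hd2, ha1, ha2, hd1, hd2,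
      mul_zero, zero_mul, smul_zero, neg_neg, sub_zero, zero_sub, add_zero, zero_add]
    try module
end

section
/- Let b₁, b₂ be two commuting boson modes and J₊=b₁†b₂, J₋=b₂†b₁, J₀=N₁-N₂. On the spin-j subspace W^{(j)} with orthonormal basis |jm⟩=(b₁†)^{j+m}(b₂†)^{j-m}|0⟩/√((j+m)!(j-m)!), the operator t_{1/2,1/2}=(1-(h/2)J₊)^{-1}b₁† acts by t_{1/2,1/2}|jm⟩ = Σ_{n=0}^{j-m} (h/2)^n Γ_n^{jm} |j+1/2, m+1/2+n⟩, where Γ_n^{jm} = [ (j-m)!(j+m+n+1)! / ((j+m)!(j-m-n)!) ]^{1/2}. -/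
open Finset

lemma boson_key {V : Type*} [AddCommGroup V] [Module ℂ V]
    (b1d b2 : V →ₗ[ℂ] V) (e : ℕ → ℕ → V)
    (hb1d : ∀ p q, b1d (e p q) = (Real.sqrt (p + 1) : ℂ) • e (p + 1) q)
    (hb2 : ∀ p q, b2 (e p q) = (Real.sqrt q : ℂ) • e p (q - 1))
    (p q : ℕ) : ∀ n : ℕ, n ≤ q →
    ((b1d ∘ₗ b2) ^ n) (b1d (e p q))
      = (Real.sqrt ((q.factorial * (p + n + 1).factorial : ℝ) /
          (p.factorial * (q - n).factorial)) : ℂ) • e (p + 1 + n) (q - n) := by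
  intro n
  induction n with
  | zero =>
    intro _
    rw [hb1d]
    simp only [pow_zero, Module.End.one_apply, Nat.add_zero, Nat.sub_zero]
    congr 2
    rw [show (q.factorial * (p + 1).factorial : ℝ) / (p.factorial * q.factorial)
        = ((p : ℝ) + 1) from ?_]
    · have hnum : (q.factorial * (p + 1).factorial : ℝ)
          = ((p : ℝ) + 1) * (p.factorial * q.factorial) := by
        rw [Nat.factorial_succ]; push_cast; ring
      rw [hnum, mul_div_assoc, div_self (by positivity), mul_one]
  | succ n ih =>
    intro hn
    have hn' : n ≤ q := Nat.le_of_succ_le hn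
    obtain ⟨k, hk⟩ : ∃ k, q - n = k + 1 := ⟨q - n - 1, by omega⟩
    have hk1 : q - (n + 1) = k := by omega
    rw [pow_succ', Module.End.mul_apply, ih hn', map_smul, LinearMap.comp_apply,
      hb2, map_smul, hb1d, smul_smul, smul_smul, hk, hk1]
    congr 2
    rw [← Complex.ofReal_mul, ← Complex.ofReal_mul]
    congr 1
    have hfr : (0:ℝ) ≤ (q.factorial * (p + n + 1).factorial : ℝ) /
        (p.factorial * (k + 1).factorial) := by positivity
    rw [← Real.sqrt_mul hfr, ← Real.sqrt_mul (by positivity)]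
    congr 1
    have e3 : (p + (n + 1) + 1).factorial = (p + n + 2) * (p + n + 1).factorial := by
      rw [show p + (n + 1) + 1 = (p + n + 1) + 1 from by ring, Nat.factorial_succ]
    have e2 : (k + 1).factorial = (k + 1) * k.factorial := Nat.factorial_succ k
    rw [e3, e2]
    have h1 : (k.factorial : ℝ) ≠ 0 := by positivity
    have h2 : (p.factorial : ℝ) ≠ 0 := by positivity
    push_cast
    field_simp
    ring

/-- Action of the raising tensor operator `t_{1/2,1/2} = (1-(h/2)J₊)⁻¹ b₁†` on `|jm⟩`.
The basis vector `|jm⟩` is encoded as `e p q` with `p = j+m`, `q = j-m`, so that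
`b₁† e p q = √(p+1) e (p+1) q` and `b₂ e p q = √q e p (q-1)`; `J₊ = b₁† b₂`.  Since `J₊`
is locally nilpotent, the geometric series for `(1-(h/2)J₊)⁻¹` applied to `b₁†|jm⟩`
truncates at `n = j-m = q`, and
`t_{1/2,1/2}|jm⟩ = Σ_{n=0}^{j-m} (h/2)^n Γ_n^{jm} |j+1/2, m+1/2+n⟩` with
`Γ_n^{jm} = √((j-m)!(j+m+n+1)!/((j+m)!(j-m-n)!))`. -/
theorem boson_raising_tensor_action {V : Type*} [AddCommGroup V] [Module ℂ V] (h : ℂ)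
    (b1d b2 : V →ₗ[ℂ] V) (e : ℕ → ℕ → V)
    (hb1d : ∀ p q, b1d (e p q) = (Real.sqrt (p + 1) : ℂ) • e (p + 1) q)
    (hb2 : ∀ p q, b2 (e p q) = (Real.sqrt q : ℂ) • e p (q - 1)) :
    ∀ p q : ℕ,
      ∑ n ∈ range (q + 1), ((h / 2) ^ n) • ((b1d ∘ₗ b2) ^ n) (b1d (e p q))
      = ∑ n ∈ range (q + 1),
          ((h / 2) ^ n *
            (Real.sqrt ((q.factorial * (p + n + 1).factorial : ℝ) /
              (p.factorial * (q - n).factorial)) : ℂ)) • e (p + 1 + n) (q - n) := by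
  intro p q
  refine Finset.sum_congr rfl fun n hn => ?_
  rw [boson_key b1d b2 e hb1d hb2 p q n (by simpa [Nat.lt_succ_iff] using hn), smul_smul]
end

section
/- With the Jordan-Schwinger boson realization J₊=b₁†b₂, J₋=b₂†b₁, J₀=N₁-N₂, the operator t_{1/2,1/2}=-(1-(h/2)J₊)^{-1}b₂ acts on the basis vector |jm⟩ of W^{(j)} by t_{1/2,1/2}|jm⟩ = -Σ_{n=0}^{j-m-1}(h/2)^n Λ_n^{jm} |j-1/2, m+1/2+n⟩, where Λ_n^{jm}=[(j-m)!(j+m+n)!/((j+m)!(j-m-n-1)!)]^{1/2}; in particular it maps W^{(j)} into W^{(j-1/2)}. -/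
open Finset

/-!
`J₊ = b₁† b₂` sends `e p (q + 1)` to `√((p + 1)(q + 1)) • e (p + 1) q`, so the coefficient of
`J₊ⁿ` from `e p (q + n)` telescopes to `√((p + n)! (q + n)! / (p! q!))`. The preceding `b₂`
contributes `√q`, which turns `(q - 1)!` into `q!`. Every term stays on the shell
`p' + q' = p + q - 1`, i.e. in `W^{(j-1/2)}`.
-/

namespace JordanSchwinger

variable {V : Type*} [AddCommGroup V] [Module ℂ V] {b1d b2 : V →ₗ[ℂ] V} {e : ℕ → ℕ → V}

theorem raising_apply (hb1d : ∀ p q, b1d (e p q) = (Real.sqrt (p + 1) : ℂ) • e (p + 1) q)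
    (hb2 : ∀ p q, b2 (e p q) = (Real.sqrt q : ℂ) • e p (q - 1)) (p q : ℕ) :
    (b1d ∘ₗ b2) (e p (q + 1)) = (√((p + 1) * (q + 1) : ℝ) : ℂ) • e (p + 1) q := by
  rw [LinearMap.comp_apply, hb2, map_smul, hb1d, smul_smul, ← Complex.ofReal_mul,
    ← Real.sqrt_mul (by positivity)]
  push_cast
  ring_nf

theorem raising_pow_apply (hb1d : ∀ p q, b1d (e p q) = (Real.sqrt (p + 1) : ℂ) • e (p + 1) q)
    (hb2 : ∀ p q, b2 (e p q) = (Real.sqrt q : ℂ) • e p (q - 1)) (n p q : ℕ) :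
    ((b1d ∘ₗ b2) ^ n) (e p (q + n))
      = (√(((p + n).factorial * (q + n).factorial : ℝ) / (p.factorial * q.factorial)) : ℂ) •
          e (p + n) q := by
  induction n generalizing p with
  | zero => simp [div_self, Nat.factorial_ne_zero]
  | succ n ih =>
    rw [pow_succ, Module.End.mul_apply, ← add_assoc, raising_apply hb1d hb2, map_smul, ih,
      smul_smul, ← Complex.ofReal_mul, ← Real.sqrt_mul (by positivity),
      show p + 1 + n = p + (n + 1) by omega]
    congr 3
    rw [Nat.factorial_succ (q + n), Nat.factorial_succ p]
    push_cast
    field_simp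

theorem raising_pow_lowering_apply
    (hb1d : ∀ p q, b1d (e p q) = (Real.sqrt (p + 1) : ℂ) • e (p + 1) q)
    (hb2 : ∀ p q, b2 (e p q) = (Real.sqrt q : ℂ) • e p (q - 1)) {n q : ℕ} (hn : n < q) (p : ℕ) :
    ((b1d ∘ₗ b2) ^ n) (b2 (e p q))
      = (√((q.factorial * (p + n).factorial : ℝ) / (p.factorial * (q - n - 1).factorial)) : ℂ) •
          e (p + n) (q - 1 - n) := by
  obtain ⟨k, rfl⟩ : ∃ k, q = k + n + 1 := ⟨q - n - 1, by omega⟩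
  rw [hb2, map_smul, Nat.add_sub_cancel, raising_pow_apply hb1d hb2, smul_smul,
    ← Complex.ofReal_mul, ← Real.sqrt_mul (by positivity), Nat.add_sub_cancel,
    show k + n + 1 - n - 1 = k by omega]
  congr 3
  rw [Nat.factorial_succ (k + n)]
  push_cast
  field_simp

end JordanSchwinger

/-- Action of the lowering tensor operator `t_{1/2,1/2} = -(1-(h/2)J₊)⁻¹ b₂` on `|jm⟩`.
The basis vector `|jm⟩` is encoded as `e p q` with `p = j+m`, `q = j-m`, so that
`b₁† e p q = √(p+1) e (p+1) q` and `b₂ e p q = √q e p (q-1)`; `J₊ = b₁† b₂`.  One has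
`t_{1/2,1/2}|jm⟩ = -Σ_{n=0}^{j-m-1} (h/2)^n Λ_n^{jm} |j-1/2, m+1/2+n⟩` with
`Λ_n^{jm} = √((j-m)!(j+m+n)!/((j+m)!(j-m-n-1)!))`; in particular the image lies in
`W^{(j-1/2)}`, the span of the vectors `e p' q'` with `p' + q' + 1 = p + q`. -/
theorem boson_lowering_tensor_action {V : Type*} [AddCommGroup V] [Module ℂ V] (h : ℂ)
    (b1d b2 : V →ₗ[ℂ] V) (e : ℕ → ℕ → V)
    (hb1d : ∀ p q, b1d (e p q) = (Real.sqrt (p + 1) : ℂ) • e (p + 1) q)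
    (hb2 : ∀ p q, b2 (e p q) = (Real.sqrt q : ℂ) • e p (q - 1)) :
    ∀ p q : ℕ,
      (-∑ n ∈ range q, ((h / 2) ^ n) • ((b1d ∘ₗ b2) ^ n) (b2 (e p q))
        = -∑ n ∈ range q,
            ((h / 2) ^ n *
              (Real.sqrt ((q.factorial * (p + n).factorial : ℝ) /
                (p.factorial * (q - n - 1).factorial)) : ℂ)) • e (p + n) (q - 1 - n)) ∧
      (-∑ n ∈ range q, ((h / 2) ^ n) • ((b1d ∘ₗ b2) ^ n) (b2 (e p q)))
        ∈ Submodule.span ℂ {v : V | ∃ p' q' : ℕ, p' + q' + 1 = p + q ∧ v = e p' q'} := by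
  intro p q
  have term_eq : ∀ n ∈ range q, ((h / 2) ^ n) • ((b1d ∘ₗ b2) ^ n) (b2 (e p q))
      = ((h / 2) ^ n * (Real.sqrt ((q.factorial * (p + n).factorial : ℝ) /
          (p.factorial * (q - n - 1).factorial)) : ℂ)) • e (p + n) (q - 1 - n) := fun n hn => by
    rw [JordanSchwinger.raising_pow_lowering_apply hb1d hb2 (mem_range.mp hn), smul_smul]
  rw [sum_congr rfl term_eq]
  refine ⟨rfl, neg_mem (Submodule.sum_mem _ fun n hn => Submodule.smul_mem _ _ ?_)⟩
  exact Submodule.subset_span ⟨p + n, q - 1 - n, by have := mem_range.mp hn; omega, rfl⟩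
end
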